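/- Let λ be a special type B partition of 2n+1. Let L be the padded column list of λ (padded with zeros to even length). Repeatedly delete from L two equal adjacent entries occupying positions 2t+1 and 2t for some t ≥ 0, until no such pair remains. Then for every maximal sequence of such deletions the number of remaining entries is the same, equal to 2p+2, where p+1 is the number of distinct odd parts of λ. (Thus the column description of the component group A(O) ≅ (ℤ/2ℤ)^p of the corresponding nilpotent orbit O of SO(2n+1,ℂ) agrees with the row description: p is one less than the number of distinct odd row lengths.) -/

import Mathlib

/-- `l` is a partition of `N`: a weakly decreasing list of positive integers with sum `N`. -/
def IsPartitionOf (N : ℕ) (l : List ℕ) : Prop :=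
  l.Pairwise (· ≥ ·) ∧ (∀ x ∈ l, 0 < x) ∧ l.sum = N

/-- the `j`-th column length `c_j(λ) = #{i : λ_i ≥ j}`. -/
def colLen (l : List ℕ) (j : ℕ) : ℕ := l.countP (fun x => decide (j ≤ x))

/-- the transpose partition, as the list `c_1 ≥ c_2 ≥ ⋯ ≥ c_{λ_1}` of column lengths. -/
def transposeList (l : List ℕ) : List ℕ :=
  (List.range (l.foldr max 0)).map (fun j => colLen l (j + 1))

/-- pad a list with one zero at the end if necessary so that its length is even. -/
def padToEven (c : List ℕ) : List ℕ := if Even c.length then c else c ++ [0]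

/-- Delete two equal adjacent entries occupying positions `2t+1` and `2t` for some `t ≥ 0`,
where positions in a list of length `m` are numbered `m-1, …, 1, 0` from first to last
(so the later of the two deleted entries has an even number of entries after it). -/
def delStepE (L L' : List ℕ) : Prop :=
  ∃ (a : ℕ) (l₁ l₂ : List ℕ), Even l₂.length ∧ L = l₁ ++ a :: a :: l₂ ∧ L' = l₁ ++ l₂

/-!
Since `c_j - c_{j+1}` is the multiplicity of `j` in `λ`, the aligned pair `(c_{2i+1}, c_{2i+2})`
of the padded column list is unequal exactly when `2i+1` is a part of `λ`. Deleting an aligned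
equal pair keeps the length even and leaves the number of unequal aligned pairs unchanged, and in a
list admitting no deletion every aligned pair is unequal. So every terminal list has length twice
the number of distinct odd parts, which is positive because `|λ|` is odd.
-/

section UnequalPairs

variable {α : Type*} [DecidableEq α]

def unequalPairCount : List α → ℕ
  | a :: b :: t => (if a = b then 0 else 1) + unequalPairCount t
  | _ => 0

theorem unequalPairCount_append : ∀ {A : List α}, Even A.length → ∀ B : List α,
    unequalPairCount (A ++ B) = unequalPairCount A + unequalPairCount B
  | [], _, _ => by simp [unequalPairCount]
  | [_], hA, _ => by simp at hA
  | a :: b :: t, hA, B => by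
    have ht : Even t.length := by simpa [Nat.even_add_one] using hA
    simp only [List.cons_append, unequalPairCount, unequalPairCount_append ht B, Nat.add_assoc]

theorem unequalPairCount_map_range (f : ℕ → α) (k : ℕ) :
    unequalPairCount ((List.range (2 * k)).map f) =
      (List.range k).countP (fun i => f (2 * i) ≠ f (2 * i + 1)) := by
  induction k with
  | zero => simp [unequalPairCount]
  | succ k ih =>
    rw [Nat.mul_succ, List.range_succ, List.range_succ, List.range_succ, List.append_assoc,
      List.map_append, unequalPairCount_append (by simp), ih, List.countP_append]
    by_cases h : f (2 * k) = f (2 * k + 1) <;> simp [unequalPairCount, h]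

end UnequalPairs

section Deletion

theorem delStepE.even_length_iff {L L' : List ℕ} (h : delStepE L L') :
    Even L'.length ↔ Even L.length := by
  obtain ⟨a, l₁, l₂, -, rfl, rfl⟩ := h
  simp [Nat.even_add, Nat.even_add_one]

theorem delStepE.unequalPairCount_eq {L L' : List ℕ} (h : delStepE L L') (hL : Even L.length) :
    unequalPairCount L' = unequalPairCount L := by
  obtain ⟨a, l₁, l₂, hl₂, rfl, rfl⟩ := h
  have hl₁ : Even l₁.length := by
    simpa [Nat.even_add, Nat.even_add_one, hl₂] using hL
  rw [unequalPairCount_append hl₁, unequalPairCount_append hl₁]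
  simp [unequalPairCount]

theorem unequalPairCount_eq_of_reflTransGen {L M : List ℕ}
    (h : Relation.ReflTransGen delStepE L M) (hL : Even L.length) :
    Even M.length ∧ unequalPairCount M = unequalPairCount L := by
  induction h with
  | refl => exact ⟨hL, rfl⟩
  | tail _ hstep ih =>
    exact ⟨hstep.even_length_iff.2 ih.1, (hstep.unequalPairCount_eq ih.1).trans ih.2⟩

theorem length_eq_of_forall_not_delStepE : ∀ {L : List ℕ}, Even L.length →
    (∀ L', ¬ delStepE L L') → L.length = 2 * unequalPairCount L
  | [], _, _ => rfl
  | [_], hL, _ => by simp at hL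
  | a :: b :: t, hL, hterm => by
    have ht : Even t.length := by simpa [Nat.even_add_one] using hL
    have hab : a ≠ b := by
      rintro rfl
      exact hterm t ⟨a, [], t, ht, rfl, rfl⟩
    have htterm : ∀ t', ¬ delStepE t t' := by
      rintro _ ⟨c, l₁, l₂, hl₂, rfl, rfl⟩
      exact hterm _ ⟨c, a :: b :: l₁, l₂, hl₂, rfl, rfl⟩
    simp only [List.length_cons, unequalPairCount, hab, if_false,
      length_eq_of_forall_not_delStepE ht htterm]
    ring

end Deletion

section Columns

theorem colLen_eq_colLen_succ_add_count (l : List ℕ) (j : ℕ) :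
    colLen l j = colLen l (j + 1) + l.count j := by
  induction l with
  | nil => rfl
  | cons a t ih =>
    simp only [colLen, List.countP_cons, List.count_cons] at ih ⊢
    rcases lt_trichotomy a j with h | rfl | h
    · simp [ih, h.not_ge, h.ne, show ¬ j + 1 ≤ a by omega]
    · simp [ih]; omega
    · simp [ih, h.le, h.ne', Nat.succ_le_of_lt h]; omega

theorem colLen_ne_colLen_succ_iff (l : List ℕ) (j : ℕ) :
    colLen l j ≠ colLen l (j + 1) ↔ j ∈ l := by
  rw [colLen_eq_colLen_succ_add_count, ← List.count_pos_iff]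
  omega

theorem colLen_foldr_max_succ (l : List ℕ) : colLen l (l.foldr max 0 + 1) = 0 := by
  refine List.countP_eq_zero.2 fun x hx => ?_
  have := List.le_max_of_le' 0 hx le_rfl
  simp only [decide_eq_true_eq]
  omega

theorem even_length_padToEven (c : List ℕ) : Even (padToEven c).length := by
  unfold padToEven
  split_ifs with h
  · exact h
  · simpa [Nat.even_add_one] using h

theorem padToEven_map_range {f : ℕ → ℕ} {m : ℕ} (hf : f m = 0) :
    padToEven ((List.range m).map f) = (List.range (2 * ((m + 1) / 2))).map f := by
  rcases Nat.even_or_odd m with ⟨r, rfl⟩ | ⟨r, rfl⟩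
  · rw [padToEven, if_pos (by simp), show 2 * ((r + r + 1) / 2) = r + r by omega]
  · rw [padToEven, if_neg (by simp), show 2 * ((2 * r + 1 + 1) / 2) = 2 * r + 1 + 1 by omega,
      List.range_succ (n := 2 * r + 1), List.map_append, List.map_singleton, hf]

theorem length_dedup_filter_odd_eq_countP {l : List ℕ} {k : ℕ} (hk : ∀ x ∈ l, x ≤ 2 * k) :
    (l.filter (fun x => decide (Odd x))).dedup.length =
      (List.range k).countP (fun i => 2 * i + 1 ∈ l) := by
  have hperm : List.Perm (((List.range k).filter (fun i => 2 * i + 1 ∈ l)).map (2 * · + 1))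
      (l.filter (fun x => decide (Odd x))).dedup := by
    refine (List.perm_ext_iff_of_nodup ((List.nodup_range.filter _).map fun i j h => by omega)
      (List.nodup_dedup _)).2 fun x => ?_
    simp only [List.mem_map, List.mem_filter, List.mem_range, decide_eq_true_eq, List.mem_dedup]
    constructor
    · rintro ⟨i, ⟨-, hi⟩, rfl⟩
      exact ⟨hi, i, rfl⟩
    · rintro ⟨hx, i, rfl⟩
      exact ⟨i, ⟨by linarith [hk _ hx], hx⟩, rfl⟩
  rw [← hperm.length_eq, List.length_map, List.countP_eq_length_filter]

theorem unequalPairCount_padToEven_transposeList (l : List ℕ) :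
    unequalPairCount (padToEven (transposeList l)) =
      (l.filter (fun x => decide (Odd x))).dedup.length := by
  rw [transposeList, padToEven_map_range (f := fun j => colLen l (j + 1)) (colLen_foldr_max_succ l),
    unequalPairCount_map_range,
    length_dedup_filter_odd_eq_countP (k := (l.foldr max 0 + 1) / 2)
      fun x hx => by have := List.le_max_of_le' 0 hx le_rfl; omega]
  simp only [ne_eq, colLen_ne_colLen_succ_iff]

end Columns

theorem exists_odd_of_odd_sum : ∀ {l : List ℕ}, Odd l.sum → ∃ x ∈ l, Odd x
  | [], h => by simp at h
  | a :: t, h => by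
    by_cases ha : Odd a
    · exact ⟨a, List.mem_cons_self, ha⟩
    · obtain ⟨x, hx, hxodd⟩ := exists_odd_of_odd_sum (l := t) (by
        rw [List.sum_cons, Nat.odd_add'] at h
        exact h.2 (Nat.not_odd_iff_even.1 ha))
      exact ⟨x, List.mem_cons_of_mem a hx, hxodd⟩

theorem typeB_componentGroup_columns_general (n : ℕ) (l : List ℕ)
    (hpart : IsPartitionOf (2 * n + 1) l) :
    ∃ p : ℕ, (l.filter (fun x => decide (Odd x))).dedup.length = p + 1 ∧
      ∀ M : List ℕ, Relation.ReflTransGen delStepE (padToEven (transposeList l)) M →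
        (∀ M', ¬ delStepE M M') → M.length = 2 * p + 2 := by
  obtain ⟨x, hx, hxodd⟩ := exists_odd_of_odd_sum (hpart.2.2 ▸ odd_two_mul_add_one n)
  have hpos : 0 < (l.filter (fun x => decide (Odd x))).dedup.length :=
    List.length_pos_of_mem (a := x) (by simpa [hxodd] using hx)
  refine ⟨_, (Nat.sub_one_add_one hpos.ne').symm, fun M hM hterm => ?_⟩
  obtain ⟨hMeven, hMcount⟩ := unequalPairCount_eq_of_reflTransGen hM (even_length_padToEven _)
  rw [length_eq_of_forall_not_delStepE hMeven hterm, hMcount,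
    unequalPairCount_padToEven_transposeList]
  omega

/-- Let `l` be a special type B partition of `2n+1`.  Starting from the padded column list
of `l` (padded with zeros to even length), repeatedly delete two equal adjacent entries at
positions `2t+1` and `2t` until no such pair remains.  Then every maximal sequence of such
deletions leaves the same number of entries, namely `2p+2`, where `p+1` is the number of
distinct odd parts of `l`. -/
theorem typeB_componentGroup_columns (n : ℕ) (l : List ℕ)
    (hpart : IsPartitionOf (2 * n + 1) l)
    (hB : ∀ e ∈ l, Even e → Even (l.count e))
    (hspecial : ∀ e ∈ transposeList l, Even e → Even ((transposeList l).count e)) :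
    ∃ p : ℕ, (l.filter (fun x => decide (Odd x))).dedup.length = p + 1 ∧
      ∀ M : List ℕ, Relation.ReflTransGen delStepE (padToEven (transposeList l)) M →
        (∀ M', ¬ delStepE M M') → M.length = 2 * p + 2 :=
  typeB_componentGroup_columns_general n l hpart
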